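/- Fix Λ > 0, λ_n = −Λ/n², and j ∈ ℕ, and let μ_j = Σ_{n≥1} n^{−(1+1/j)} δ_{λ_n} (a finite measure on ℝ). Then for every q ∈ (0,1) with j > q/(1−q), one has D⁺_{μ_j}(q) ≥ (1 − (1 + 1/j)q)/(3(1−q)). -/

import Mathlib

open MeasureTheory Filter Set Topology ENNReal

noncomputable section

/-- `I_μ(q, ε) = ∫ μ(B(x,ε))^{q-1} dμ(x)`, integrated over `{x : μ(B(x,ε)) > 0}`. -/
def fracIntegral (μ : Measure ℝ) (q ε : ℝ) : ℝ≥0∞ :=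
  ∫⁻ x in {x : ℝ | 0 < μ (Ioo (x - ε) (x + ε))}, μ (Ioo (x - ε) (x + ε)) ^ (q - 1) ∂μ

/-- lower q-generalized fractal dimension. -/
def Dlower (μ : Measure ℝ) (q : ℝ) : ℝ :=
  liminf (fun ε : ℝ => Real.log (fracIntegral μ q ε).toReal / ((q - 1) * Real.log ε)) (𝓝[>] 0)

/-- upper q-generalized fractal dimension. -/
def Dupper (μ : Measure ℝ) (q : ℝ) : ℝ :=
  limsup (fun ε : ℝ => Real.log (fracIntegral μ q ε).toReal / ((q - 1) * Real.log ε)) (𝓝[>] 0)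

/-- index set of the hydrogen orbitals. -/
structure HIndex where
  n : ℕ
  l : ℕ
  m : ℤ
  hn : 1 ≤ n
  hl : l < n
  hm : -(l : ℤ) ≤ m ∧ m ≤ (l : ℤ)

instance : Fact ((1 : ℝ≥0∞) ≤ 2) := ⟨one_le_two⟩

/-- the bound-state space -/
abbrev Hspace := lp (fun _ : HIndex => ℂ) 2

/-- eigenvalues of the hydrogen Hamiltonian -/
def lam (Λ : ℝ) (n : ℕ) : ℝ := -Λ / (n : ℝ) ^ 2

/-- spectral measure of a bound state -/
def specMeasure (Λ : ℝ) (ψ : Hspace) : Measure ℝ :=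
  Measure.sum fun i : HIndex =>
    ENNReal.ofReal (‖ψ i‖ ^ 2) • Measure.dirac (lam Λ i.n)

/-!
With `α = 1 + 1/j`, the atoms `n^(-α)` of the measure sit at `λ_n = -Λ/n²`, and consecutive atoms
are at least `2Λ/(n+1)³` apart. At the scale `ε_N = Λ/(4N³) = 2Λ/(2N)³` the first `N` atoms are
therefore isolated, each contributes `(n^(-α))^q ≥ N^(-αq)` to `I(q, ε_N)`, and so
`I(q, ε_N) ≥ N^(1-αq)`. Since `ln ε_N ~ -3 ln N`, the ratio `ln I / ((q-1) ln ε)` is at least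
`(1-αq)/(3(1-q)) - o(1)` along `ε_N → 0`.

A `limsup` of real numbers that is unbounded above is a junk value, so the ratio must also be
bounded above near `0`. This follows from covering the support `[-Λ, 0]` by `⌊Λ/ε⌋ + 1` intervals
of length `ε`: each interval `J` lies in every ball `B(x, ε)` with `x ∈ J`, so it contributes at
most `μ(J)^q ≤ μ(ℝ)^q`, whence `I(q, ε) ≤ (Λ/ε + 1) μ(ℝ)^q`.
-/

lemma ENNReal.rpow_le_rpow_of_nonpos {x y : ℝ≥0∞} {z : ℝ} (hz : z ≤ 0) (hxy : x ≤ y) :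
    y ^ z ≤ x ^ z := by
  rw [← neg_neg z, ENNReal.rpow_neg y, ENNReal.rpow_neg x]
  exact ENNReal.inv_le_inv.mpr (ENNReal.rpow_le_rpow hxy (neg_nonneg.mpr hz))

lemma ENNReal.rpow_sub_one_mul_self {x : ℝ≥0∞} (h0 : x ≠ 0) (htop : x ≠ ⊤) (y : ℝ) :
    x ^ (y - 1) * x = x ^ y := by
  conv_rhs => rw [← sub_add_cancel y 1, ENNReal.rpow_add _ _ h0 htop, ENNReal.rpow_one]

lemma tendsto_mul_div_mul_add_atTop (a : ℝ) {c : ℝ} (hc : c ≠ 0) (d : ℝ) :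
    Tendsto (fun L => a * L / (c * L + d)) atTop (𝓝 (a / c)) := by
  have h : Tendsto (fun L : ℝ => a / (c + d * L⁻¹)) atTop (𝓝 (a / (c + d * 0))) :=
    tendsto_const_nhds.div (tendsto_const_nhds.add (tendsto_inv_atTop_zero.const_mul d))
      (by simpa using hc)
  rw [mul_zero, add_zero] at h
  refine h.congr' ((eventually_gt_atTop 0).mono fun L hL => ?_)
  dsimp only
  rw [show c * L + d = (c + d * L⁻¹) * L by field_simp, mul_div_mul_right _ _ hL.ne']

lemma le_limsup_of_tendsto_of_eventually_le {ι α : Type*} {l : Filter ι} [l.NeBot]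
    {f : Filter α} {u : α → ℝ} {φ : ι → α} {g : ι → ℝ} {T : ℝ}
    (hφ : Tendsto φ l f) (hg : Tendsto g l (𝓝 T)) (hgu : ∀ᶠ i in l, g i ≤ u (φ i))
    (hu : IsBoundedUnder (· ≤ ·) f u) : T ≤ limsup u f := by
  refine le_of_forall_lt_imp_le_of_dense fun c hc => le_limsup_of_frequently_le ?_ hu
  have hc_le : ∀ᶠ i in l, c ≤ u (φ i) :=
    ((hg.eventually (lt_mem_nhds hc)).and hgu).mono fun i h => h.1.le.trans h.2
  exact hφ.frequently hc_le.frequently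

def dimRatio (μ : Measure ℝ) (q ε : ℝ) : ℝ :=
  Real.log (fracIntegral μ q ε).toReal / ((q - 1) * Real.log ε)

section FracIntegral

variable {μ : Measure ℝ} {q ε : ℝ}

lemma isBoundedUnder_dimRatio_of_toReal_le {C : ℝ} (hq : q < 1)
    (h : ∀ᶠ ε in 𝓝[>] 0, (fracIntegral μ q ε).toReal ≤ C / ε) :
    IsBoundedUnder (· ≤ ·) (𝓝[>] 0) (dimRatio μ q) := by
  refine isBoundedUnder_of_eventually_le (a := (|Real.log C| + 1) / (1 - q)) ?_
  filter_upwards [h, Ioo_mem_nhdsGT (Real.exp_pos (-1))] with ε hI ⟨hε, hε_lt⟩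
  have hlog_ε : 1 ≤ -Real.log ε := by
    linarith [(Real.log_lt_iff_lt_exp hε).mpr hε_lt]
  have hlog_I : Real.log (fracIntegral μ q ε).toReal ≤ |Real.log C| - Real.log ε := by
    rcases ENNReal.toReal_nonneg.eq_or_lt with h0 | hpos
    · rw [← h0, Real.log_zero]; linarith [abs_nonneg (Real.log C)]
    have hC : 0 < C := by
      have := hpos.trans_le hI
      rwa [div_pos_iff_of_pos_right hε] at this
    calc Real.log (fracIntegral μ q ε).toReal ≤ Real.log (C / ε) := Real.log_le_log hpos hI
      _ = Real.log C - Real.log ε := Real.log_div hC.ne' hε.ne'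
      _ ≤ |Real.log C| - Real.log ε := by linarith [le_abs_self (Real.log C)]
  rw [dimRatio, div_le_iff₀ (mul_pos_of_neg_of_neg (by linarith) (by linarith)),
    div_mul_eq_mul_div, le_div_iff₀ (by linarith)]
  nlinarith [mul_le_mul_of_nonneg_left hlog_I (by linarith : (0 : ℝ) ≤ 1 - q),
    mul_nonneg (abs_nonneg (Real.log C)) (by linarith : (0 : ℝ) ≤ -Real.log ε - 1)]

lemma le_dimRatio_of_ofReal_le_fracIntegral {y : ℝ} (hq : q < 1) (hε : ε ∈ Ioo 0 1)
    (hy : 0 < y) (hI : fracIntegral μ q ε ≠ ⊤) (hyI : ENNReal.ofReal y ≤ fracIntegral μ q ε) :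
    Real.log y / ((q - 1) * Real.log ε) ≤ dimRatio μ q ε := by
  have hden : 0 < (q - 1) * Real.log ε :=
    mul_pos_of_neg_of_neg (by linarith) (Real.log_neg hε.1 hε.2)
  exact div_le_div_of_nonneg_right
    (Real.log_le_log hy ((ENNReal.ofReal_le_iff_le_toReal hI).mp hyI)) hden.le

variable [IsFiniteMeasure μ]

lemma sum_rpow_le_fracIntegral (F : Finset ℝ) (hpos : ∀ x ∈ F, μ {x} ≠ 0)
    (hiso : ∀ x ∈ F, μ (Ioo (x - ε) (x + ε)) = μ {x}) :
    ∑ x ∈ F, μ {x} ^ q ≤ fracIntegral μ q ε := by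
  have hF : (F : Set ℝ) ⊆ {x | 0 < μ (Ioo (x - ε) (x + ε))} := fun x hx => by
    simpa [hiso x hx, pos_iff_ne_zero] using hpos x hx
  calc ∑ x ∈ F, μ {x} ^ q = ∑ x ∈ F, μ (Ioo (x - ε) (x + ε)) ^ (q - 1) * μ {x} :=
        Finset.sum_congr rfl fun x hx => by
          rw [hiso x hx, ENNReal.rpow_sub_one_mul_self (hpos x hx) (measure_ne_top μ _)]
    _ = ∫⁻ x in F, μ (Ioo (x - ε) (x + ε)) ^ (q - 1) ∂μ := (lintegral_finset _ _).symm
    _ ≤ fracIntegral μ q ε := lintegral_mono_set hF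

lemma setLIntegral_Ico_le_measure_univ_rpow (hq : q ∈ Icc (0 : ℝ) 1) (c : ℝ) :
    ∫⁻ x in Ico c (c + ε), μ (Ioo (x - ε) (x + ε)) ^ (q - 1) ∂μ ≤ μ univ ^ q := by
  set J := Ico c (c + ε)
  rcases eq_or_ne (μ J) 0 with h0 | hJ
  · rw [setLIntegral_measure_zero _ _ h0]; exact zero_le
  have hball : ∀ x ∈ J, J ⊆ Ioo (x - ε) (x + ε) := fun x hx y hy =>
    ⟨by linarith [hx.2, hy.1], by linarith [hx.1, hy.2]⟩
  calc ∫⁻ x in J, μ (Ioo (x - ε) (x + ε)) ^ (q - 1) ∂μ ≤ ∫⁻ _ in J, μ J ^ (q - 1) ∂μ :=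
        setLIntegral_mono' measurableSet_Ico fun x hx =>
          ENNReal.rpow_le_rpow_of_nonpos (by linarith [hq.2]) (measure_mono (hball x hx))
    _ = μ J ^ q := by
      rw [setLIntegral_const, ENNReal.rpow_sub_one_mul_self hJ (measure_ne_top μ J)]
    _ ≤ μ univ ^ q := ENNReal.rpow_le_rpow (measure_mono (subset_univ J)) hq.1

lemma Icc_subset_iUnion_Ico {a b : ℝ} (hε : 0 < ε) :
    Icc a b ⊆ ⋃ k : Fin (⌊(b - a) / ε⌋₊ + 1), Ico (a + k * ε) (a + k * ε + ε) := by
  intro y hy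
  have hk : ⌊(y - a) / ε⌋₊ < ⌊(b - a) / ε⌋₊ + 1 :=
    Nat.lt_succ_of_le (Nat.floor_le_floor (by gcongr; exact hy.2))
  refine mem_iUnion.mpr ⟨⟨_, hk⟩, ?_⟩
  have h1 := (le_div_iff₀ hε).mp (Nat.floor_le (div_nonneg (sub_nonneg.mpr hy.1) hε.le))
  have h2 := (div_lt_iff₀ hε).mp (Nat.lt_floor_add_one ((y - a) / ε))
  constructor <;> push_cast <;> linarith

lemma fracIntegral_le_of_measure_compl_Icc_eq_zero {a b : ℝ} (hμ : μ (Icc a b)ᶜ = 0)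
    (hq : q ∈ Icc (0 : ℝ) 1) (hε : 0 < ε) :
    fracIntegral μ q ε ≤ ((⌊(b - a) / ε⌋₊ + 1 : ℕ) : ℝ≥0∞) * μ univ ^ q := by
  set f : ℝ → ℝ≥0∞ := fun x => μ (Ioo (x - ε) (x + ε)) ^ (q - 1)
  have hfull : μ.restrict (Icc a b) = μ := Measure.restrict_eq_self_of_ae_mem (ae_iff.mpr hμ)
  calc fracIntegral μ q ε ≤ ∫⁻ x, f x ∂μ := setLIntegral_le_lintegral _ _
    _ = ∫⁻ x in Icc a b, f x ∂μ := by rw [hfull]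
    _ ≤ ∫⁻ x in ⋃ k : Fin (⌊(b - a) / ε⌋₊ + 1), Ico (a + k * ε) (a + k * ε + ε), f x ∂μ :=
        lintegral_mono_set (Icc_subset_iUnion_Ico hε)
    _ ≤ ∑' k : Fin (⌊(b - a) / ε⌋₊ + 1), ∫⁻ x in Ico (a + k * ε) (a + k * ε + ε), f x ∂μ :=
        lintegral_iUnion_le _ _
    _ ≤ ∑' _ : Fin (⌊(b - a) / ε⌋₊ + 1), μ univ ^ q :=
        ENNReal.tsum_le_tsum fun k => setLIntegral_Ico_le_measure_univ_rpow hq _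
    _ = _ := by simp [tsum_fintype]

lemma fracIntegral_ne_top_of_measure_compl_Icc_eq_zero {a b : ℝ} (hμ : μ (Icc a b)ᶜ = 0)
    (hq : q ∈ Icc (0 : ℝ) 1) (hε : 0 < ε) : fracIntegral μ q ε ≠ ⊤ :=
  ne_top_of_le_ne_top
    (ENNReal.mul_ne_top (ENNReal.natCast_ne_top _)
      (ENNReal.rpow_ne_top_of_nonneg hq.1 (measure_ne_top μ univ)))
    (fracIntegral_le_of_measure_compl_Icc_eq_zero hμ hq hε)

lemma isBoundedUnder_dimRatio_of_measure_compl_Icc_eq_zero {a b : ℝ} (hab : a ≤ b)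
    (hμ : μ (Icc a b)ᶜ = 0) (hq : q ∈ Ico (0 : ℝ) 1) :
    IsBoundedUnder (· ≤ ·) (𝓝[>] 0) (dimRatio μ q) := by
  set M := (μ univ ^ q).toReal
  refine isBoundedUnder_dimRatio_of_toReal_le (C := (b - a + 1) * M) hq.2 ?_
  filter_upwards [Ioo_mem_nhdsGT one_pos] with ε ⟨hε, hε_lt⟩
  have hI := ENNReal.toReal_mono (ENNReal.mul_ne_top (ENNReal.natCast_ne_top _)
      (ENNReal.rpow_ne_top_of_nonneg hq.1 (measure_ne_top μ univ)))
    (fracIntegral_le_of_measure_compl_Icc_eq_zero hμ (Ico_subset_Icc_self hq) hε)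
  rw [ENNReal.toReal_mul, ENNReal.toReal_natCast] at hI
  have hK : ((⌊(b - a) / ε⌋₊ + 1 : ℕ) : ℝ) ≤ (b - a + 1) / ε := by
    rw [le_div_iff₀ hε]
    push_cast
    nlinarith [Nat.floor_le (div_nonneg (sub_nonneg.mpr hab) hε.le), mul_div_cancel₀ (b - a) hε.ne']
  calc (fracIntegral μ q ε).toReal ≤ _ := hI
    _ ≤ (b - a + 1) / ε * M := mul_le_mul_of_nonneg_right hK ENNReal.toReal_nonneg
    _ = (b - a + 1) * M / ε := by ring

end FracIntegral

section AtomicMeasure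

variable {ι α : Type*} [Countable ι] [MeasurableSpace α] [MeasurableSingletonClass α]
  (c : ι → ℝ≥0∞) (x : ι → α)

lemma sum_smul_dirac_apply (s : Set α) :
    Measure.sum (fun i => c i • Measure.dirac (x i)) s = ∑' i, c i * s.indicator 1 (x i) := by
  simp only [Measure.sum_apply_of_countable, Measure.smul_apply, Measure.dirac_apply, smul_eq_mul]

lemma sum_smul_dirac_apply_of_mem_iff {s : Set α} {i₀ : ι} (h : ∀ i, x i ∈ s ↔ i = i₀) :
    Measure.sum (fun i => c i • Measure.dirac (x i)) s = c i₀ := by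
  rw [sum_smul_dirac_apply, tsum_eq_single i₀ fun i hi => by
    rw [indicator_of_notMem (mt (h i).mp hi), mul_zero]]
  rw [indicator_of_mem ((h i₀).mpr rfl), Pi.one_apply, mul_one]

lemma sum_smul_dirac_apply_of_forall_notMem {s : Set α} (h : ∀ i, x i ∉ s) :
    Measure.sum (fun i => c i • Measure.dirac (x i)) s = 0 := by
  simp [sum_smul_dirac_apply, indicator_of_notMem (h _)]

end AtomicMeasure

section Hydrogen

variable {Λ : ℝ}

lemma lam_mem_Icc (hΛ : 0 ≤ Λ) {n : ℕ} (hn : 1 ≤ n) : lam Λ n ∈ Icc (-Λ) 0 := by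
  have hn2 : (1 : ℝ) ≤ (n : ℝ) ^ 2 := one_le_pow₀ (by exact_mod_cast hn)
  rw [lam, neg_div]
  exact ⟨neg_le_neg (div_le_self hΛ hn2), neg_nonpos.mpr (by positivity)⟩

lemma lam_le_lam (hΛ : 0 ≤ Λ) {n m : ℕ} (hn : 1 ≤ n) (h : n ≤ m) : lam Λ n ≤ lam Λ m := by
  rw [lam, lam, neg_div, neg_div, neg_le_neg_iff]
  exact div_le_div_of_nonneg_left hΛ (pow_pos (Nat.cast_pos.mpr hn) 2) (by gcongr)

lemma two_mul_div_le_lam_succ_sub (hΛ : 0 ≤ Λ) {n m : ℕ} (h : n < m) :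
    2 * Λ / ((n : ℝ) + 2) ^ 3 ≤ lam Λ (m + 1) - lam Λ (n + 1) := by
  have hstep : 2 * Λ / ((n : ℝ) + 2) ^ 3 ≤ lam Λ (n + 2) - lam Λ (n + 1) := by
    rw [lam, lam]
    push_cast
    rw [show -Λ / ((n : ℝ) + 2) ^ 2 - -Λ / ((n : ℝ) + 1) ^ 2
        = Λ * (2 * n + 3) / (((n : ℝ) + 1) ^ 2 * ((n : ℝ) + 2) ^ 2) by field_simp; ring,
      div_le_div_iff₀ (by positivity) (by positivity)]
    nlinarith [mul_nonneg (mul_nonneg hΛ (sq_nonneg ((n : ℝ) + 2)))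
      (by positivity : (0 : ℝ) ≤ 3 * n + 4)]
  linarith [lam_le_lam hΛ (n := n + 2) (m := m + 1) (by omega) (by omega)]

lemma lam_succ_strictMono (hΛ : 0 < Λ) : StrictMono fun n : ℕ => lam Λ (n + 1) :=
  fun n m h => by
    have hgap := two_mul_div_le_lam_succ_sub hΛ.le h
    have : 0 < 2 * Λ / ((n : ℝ) + 2) ^ 3 := by positivity
    dsimp only
    linarith

lemma lam_succ_mem_Ioo_iff (hΛ : 0 < Λ) {N n : ℕ} (hn : n < N) (m : ℕ) :
    lam Λ (m + 1) ∈ Ioo (lam Λ (n + 1) - Λ / (4 * N ^ 3)) (lam Λ (n + 1) + Λ / (4 * N ^ 3)) ↔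
      m = n := by
  have hε_le : ∀ k < N, Λ / (4 * N ^ 3) ≤ 2 * Λ / ((k : ℝ) + 2) ^ 3 := fun k hk => by
    rw [show Λ / (4 * N ^ 3) = 2 * Λ / (2 * N) ^ 3 by ring]
    have : (k : ℝ) + 2 ≤ 2 * N := by
      have : k + 2 ≤ 2 * N := by omega
      exact_mod_cast this
    gcongr
  refine ⟨fun ⟨h₁, h₂⟩ => ?_, fun h => ?_⟩
  · by_contra hmn
    rcases lt_or_gt_of_ne hmn with h | h
    · linarith [two_mul_div_le_lam_succ_sub hΛ.le h, hε_le m (h.trans hn)]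
    · linarith [two_mul_div_le_lam_succ_sub hΛ.le h, hε_le n hn]
  · have : 0 < Λ / (4 * N ^ 3) := by
      have : 0 < N := by omega
      positivity
    subst h
    constructor <;> linarith

def hydrogenPowerMeasure (Λ α : ℝ) : Measure ℝ :=
  Measure.sum fun n : ℕ =>
    ENNReal.ofReal (((n + 1 : ℕ) : ℝ) ^ (-α)) • Measure.dirac (lam Λ (n + 1))

lemma hydrogenPowerMeasure_compl_Icc (hΛ : 0 ≤ Λ) (α : ℝ) :
    hydrogenPowerMeasure Λ α (Icc (-Λ) 0)ᶜ = 0 :=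
  sum_smul_dirac_apply_of_forall_notMem _ _ fun n h => h (lam_mem_Icc hΛ n.succ_pos)

lemma isFiniteMeasure_hydrogenPowerMeasure (Λ : ℝ) {α : ℝ} (hα : 1 < α) :
    IsFiniteMeasure (hydrogenPowerMeasure Λ α) := by
  have hsum : Summable fun n : ℕ => ((n + 1 : ℕ) : ℝ) ^ (-α) :=
    (summable_nat_add_iff 1).mpr (Real.summable_nat_rpow.mpr (by linarith))
  refine ⟨?_⟩
  rw [hydrogenPowerMeasure, sum_smul_dirac_apply]
  simp only [indicator_univ, Pi.one_apply, mul_one]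
  rw [← ENNReal.ofReal_tsum_of_nonneg (fun n => by positivity) hsum]
  exact ENNReal.ofReal_lt_top

lemma ofReal_rpow_le_fracIntegral_hydrogenPowerMeasure (hΛ : 0 < Λ) {α q : ℝ} (hα : 1 < α)
    (hq : 0 ≤ q) {N : ℕ} (hN : 1 ≤ N) :
    ENNReal.ofReal ((N : ℝ) ^ (1 - α * q))
      ≤ fracIntegral (hydrogenPowerMeasure Λ α) q (Λ / (4 * N ^ 3)) := by
  have := isFiniteMeasure_hydrogenPowerMeasure Λ hα
  set μ := hydrogenPowerMeasure Λ α
  set w : ℕ → ℝ≥0∞ := fun n => ENNReal.ofReal (((n + 1 : ℕ) : ℝ) ^ (-α))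
  have hinj := (lam_succ_strictMono hΛ).injective
  have hatom : ∀ n, μ {lam Λ (n + 1)} = w n := fun n =>
    sum_smul_dirac_apply_of_mem_iff _ _ fun m => mem_singleton_iff.trans hinj.eq_iff
  have hw : ∀ n < N, ENNReal.ofReal ((N : ℝ) ^ (-(α * q))) ≤ w n ^ q := fun n hn => by
    rw [ENNReal.ofReal_rpow_of_nonneg (by positivity) hq, ← Real.rpow_mul (by positivity),
      neg_mul]
    refine ENNReal.ofReal_le_ofReal (Real.rpow_le_rpow_of_nonpos (by positivity) ?_
      (by nlinarith))
    exact_mod_cast hn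
  calc ENNReal.ofReal ((N : ℝ) ^ (1 - α * q))
      = ∑ _n ∈ Finset.range N, ENNReal.ofReal ((N : ℝ) ^ (-(α * q))) := by
        rw [Finset.sum_const, Finset.card_range, nsmul_eq_mul, sub_eq_add_neg,
          Real.rpow_add (Nat.cast_pos.mpr hN), Real.rpow_one,
          ENNReal.ofReal_mul (Nat.cast_nonneg N), ENNReal.ofReal_natCast]
    _ ≤ ∑ n ∈ Finset.range N, w n ^ q :=
        Finset.sum_le_sum fun n hn => hw n (Finset.mem_range.mp hn)
    _ = ∑ x ∈ (Finset.range N).image fun n => lam Λ (n + 1), μ {x} ^ q := by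
        rw [Finset.sum_image hinj.injOn]
        simp only [hatom, w]
    _ ≤ fracIntegral μ q (Λ / (4 * N ^ 3)) := by
        refine sum_rpow_le_fracIntegral _ ?_ ?_ <;>
          simp only [Finset.mem_image, Finset.mem_range] <;> rintro _ ⟨n, hn, rfl⟩
        · rw [hatom]
          exact (ENNReal.ofReal_pos.mpr (by positivity)).ne'
        · rw [hatom]
          exact sum_smul_dirac_apply_of_mem_iff _ _ (lam_succ_mem_Ioo_iff hΛ hn)

theorem le_Dupper_hydrogenPowerMeasure (hΛ : 0 < Λ) {α q : ℝ} (hα : 1 < α)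
    (hq : q ∈ Ico (0 : ℝ) 1) :
    (1 - α * q) / (3 * (1 - q)) ≤ Dupper (hydrogenPowerMeasure Λ α) q := by
  have := isFiniteMeasure_hydrogenPowerMeasure Λ hα
  have hsupp := hydrogenPowerMeasure_compl_Icc hΛ.le α
  set ε : ℕ → ℝ := fun N => Λ / (4 * N ^ 3)
  have hε : Tendsto ε atTop (𝓝[>] 0) := by
    refine tendsto_nhdsWithin_iff.mpr ⟨tendsto_const_nhds.div_atTop ?_, ?_⟩
    · exact Tendsto.const_mul_atTop four_pos
        ((tendsto_pow_atTop three_ne_zero).comp tendsto_natCast_atTop_atTop)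
    · filter_upwards [eventually_ge_atTop 1] with N hN
      have : (0 : ℝ) < N := Nat.cast_pos.mpr hN
      exact div_pos hΛ (by positivity)
  have hlim := (tendsto_mul_div_mul_add_atTop (1 - α * q) (c := 3 * (1 - q))
    (by linarith [hq.2]) ((q - 1) * Real.log (Λ / 4))).comp
    (Real.tendsto_log_atTop.comp tendsto_natCast_atTop_atTop)
  refine le_limsup_of_tendsto_of_eventually_le hε hlim ?_
    (isBoundedUnder_dimRatio_of_measure_compl_Icc_eq_zero (by linarith) hsupp hq)
  filter_upwards [eventually_ge_atTop 1, hε.eventually (Ioo_mem_nhdsGT one_pos)] with N hN hεN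
  have hN0 : (0 : ℝ) < N := Nat.cast_pos.mpr hN
  have hlog_ε : (q - 1) * Real.log (ε N)
      = 3 * (1 - q) * Real.log N + (q - 1) * Real.log (Λ / 4) := by
    rw [show ε N = Λ / 4 / (N : ℝ) ^ 3 by ring, Real.log_div (by positivity) (by positivity),
      Real.log_pow]
    push_cast
    ring
  have := le_dimRatio_of_ofReal_le_fracIntegral hq.2 hεN (by positivity)
    (fracIntegral_ne_top_of_measure_compl_Icc_eq_zero hsupp (Ico_subset_Icc_self hq) hεN.1)
    (ofReal_rpow_le_fracIntegral_hydrogenPowerMeasure hΛ hα hq.1 hN)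
  rwa [Real.log_rpow hN0, hlog_ε] at this

end Hydrogen

theorem hydrogen_model_upper_dimension_lower_bound
    (Λ : ℝ) (hΛ : 0 < Λ) (j : ℕ) (q : ℝ) (hq : q ∈ Ioo (0 : ℝ) 1)
    (hj : q / (1 - q) < (j : ℝ))
    (μj : Measure ℝ)
    (hμ : μj = Measure.sum fun n : ℕ =>
      ENNReal.ofReal (((n + 1 : ℕ) : ℝ) ^ (-(1 + 1 / (j : ℝ)))) •
        Measure.dirac (lam Λ (n + 1))) :
    (1 - (1 + 1 / (j : ℝ)) * q) / (3 * (1 - q)) ≤ Dupper μj q := by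
  have hj_pos : (0 : ℝ) < j := (div_pos hq.1 (sub_pos.mpr hq.2)).trans hj
  subst hμ
  exact le_Dupper_hydrogenPowerMeasure hΛ (lt_add_of_pos_right 1 (one_div_pos.mpr hj_pos))
    ⟨hq.1.le, hq.2⟩
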